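/- Let F_q be a finite field with q elements, K a field extension of F_q of degree m, 1 ≤ k < l ≤ m, and g ∈ K^l a vector whose entries are linearly independent over F_q, with Gabidulin code C_{k,g} ⊆ K^l. Fix an ordered F_q-basis b of K, let W = span_{F_q}{g_1,…,g_l}, and let d be the largest positive integer such that W is a vector space over the subfield F_{q^d} ⊆ K. Let f : F_q^{l×m} → F_q^{l×m} be of the form f(A) = L·A·M_α for some L ∈ GL_l(F_q) and α ∈ K^×, where M_α := ε_b(α·b). Then f(ε_b(C_{k,g})) = ε_b(C_{k,g}) if and only if there exists β ∈ F_{q^d}^× such that g·L^T = β·g. In particular, the set {A ↦ L·A·M_α : α ∈ K^×, and L ∈ GL_l(F_q) with g·L^T = β·g for some β ∈ F_{q^d}^×} is contained in the group of invertible F_q-linear rank-preserving maps fixing ε_b(C_{k,g}) setwise. -/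

import Mathlib

open Matrix
open scoped MatrixGroups

/-- Matrix expansion with respect to an ordered basis `b` of `K` over `F`. -/
noncomputable def expand {F K : Type*} [Field F] [Field K] [Algebra F K] {m l : ℕ}
    (b : Module.Basis (Fin m) F K) (x : Fin l → K) : Matrix (Fin l) (Fin m) F :=
  Matrix.of fun i j => b.repr (x i) j

/-!
Under `ε_b`, the map `A ↦ L A M_α` becomes `x ↦ α • L x` on `K^l`; as `ε_b` is injective and `C` is
a `K`-subspace, it fixes `ε_b(C)` exactly when `L` maps `C` onto itself.

Since `L` has entries in `F`, it commutes with the coordinatewise Frobenius `x ↦ x^q`. If `L C = C`,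
then `L g` and its Frobenius twists `L g^[s]` (`s < k`) lie in `C`, and the linear independence of
the Moore vectors `g^[0], …, g^[k]` forces `L g = β g`. Conversely `L g = β g` gives
`L g^[i] = β^(q^i) g^[i]`, hence `L C = C`.

Finally `L g = β g` means `β W ⊆ W`, and the stabilizer `{x | x W ⊆ W}` of `W` is exactly `F_{q^d}`.
-/

open FiniteField

section Frobenius

variable {F K : Type*} [Field F] [Field K] [Algebra F K]

theorem frobeniusAlgHom_pow_apply [Fintype F] (s : ℕ) (x : K) :
    (frobeniusAlgHom F K ^ s) x = x ^ Fintype.card F ^ s := by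
  rw [AlgHom.coe_pow, coe_frobeniusAlgHom, pow_iterate]

theorem AlgHom.comp_mulVec_map_algebraMap {n : Type*} [Fintype n] (φ : K →ₐ[F] K)
    (M : Matrix n n F) (x : n → K) :
    φ ∘ (M.map (algebraMap F K) *ᵥ x) = M.map (algebraMap F K) *ᵥ (φ ∘ x) := by
  funext i
  simp [Matrix.mulVec, dotProduct, map_sum]

end Frobenius

section Moore

open Polynomial
open scoped Finset

variable (F : Type*) {K : Type*} [Fintype F] [Field K] {l : ℕ}

/-- The `i`-th Frobenius twist `g^[i] = (g_j^(q^i))_j`, a row of the Moore matrix of `g`. -/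
def moore (g : Fin l → K) (i : ℕ) : Fin l → K := fun j => g j ^ Fintype.card F ^ i

def gabidulinCode (g : Fin l → K) (k : ℕ) : Submodule K (Fin l → K) :=
  Submodule.span K (Set.range fun i : Fin k => moore F g i)

variable {F}

theorem moore_zero (g : Fin l → K) : moore F g 0 = g := by
  funext j; simp [moore]

theorem moore_mem_gabidulinCode (g : Fin l → K) {k i : ℕ} (hi : i < k) :
    moore F g i ∈ gabidulinCode F g k :=
  Submodule.subset_span ⟨⟨i, hi⟩, rfl⟩

theorem self_mem_gabidulinCode (g : Fin l → K) {k : ℕ} (hk : 1 ≤ k) :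
    g ∈ gabidulinCode F g k := by
  simpa only [moore_zero] using moore_mem_gabidulinCode (F := F) g hk

variable [Field F] [Algebra F K]

theorem frobeniusAlgHom_pow_comp_moore (g : Fin l → K) (s i : ℕ) :
    (frobeniusAlgHom F K ^ s) ∘ moore F g i = moore F g (i + s) := by
  funext j
  simp only [Function.comp_apply, frobeniusAlgHom_pow_apply, moore, ← pow_mul, pow_add]

/-- The linearized polynomial `∑ aᵢ X^{qⁱ}` is `F`-linear, so it vanishes on all `q^l` elements of
`span_F g` while its degree is below `q^l`. -/
theorem linearIndependent_moore [Fintype K] {g : Fin l → K} (hg : LinearIndependent F g) :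
    LinearIndependent K fun i : Fin l => moore F g i := by
  classical
  have hq : 1 < Fintype.card F := Fintype.one_lt_card
  rw [Fintype.linearIndependent_iff]
  intro a ha
  let P : K[X] := ∑ i : Fin l, C (a i) * X ^ Fintype.card F ^ (i : ℕ)
  let T : K →ₗ[F] K := ∑ i : Fin l, a i • (frobeniusAlgHom F K ^ (i : ℕ)).toLinearMap
  have hPT : ∀ x, P.eval x = T x := fun x => by
    simp [P, T, eval_finsetSum, coe_frobeniusAlgHom, pow_iterate]
  have hT : Submodule.span F (Set.range g) ≤ LinearMap.ker T := by
    rw [Submodule.span_le]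
    rintro _ ⟨j, rfl⟩
    have := congrFun ha j
    simpa [T, moore, coe_frobeniusAlgHom, pow_iterate] using this
  have hcard : #(Submodule.span F (Set.range g) : Set K).toFinset = Fintype.card F ^ l := by
    rw [Set.toFinset_card, ← Nat.card_eq_fintype_card, SetLike.coe_sort_coe,
      Module.natCard_eq_pow_finrank (K := F), finrank_span_eq_card hg, Fintype.card_fin,
      Nat.card_eq_fintype_card]
  have hdeg : P.degree < #(Submodule.span F (Set.range g) : Set K).toFinset := by
    rw [hcard]
    refine (degree_sum_le _ _).trans_lt ((Finset.sup_lt_iff (WithBot.bot_lt_coe _)).mpr ?_)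
    intro i _
    exact (degree_C_mul_X_pow_le _ _).trans_lt (by exact_mod_cast Nat.pow_lt_pow_right hq i.2)
  have hP : P = 0 := eq_zero_of_degree_lt_of_eval_finset_eq_zero _ hdeg fun x hx => by
    rw [hPT]; exact hT (Set.mem_toFinset.mp hx)
  intro i
  have := congrArg (coeff · (Fintype.card F ^ (i : ℕ))) hP
  simpa [P, finsetSum_coeff, coeff_C_mul_X_pow, (Nat.pow_right_injective hq).eq_iff,
    Fin.val_inj] using this

theorem moore_notMem_gabidulinCode [Fintype K] {g : Fin l → K} (hg : LinearIndependent F g)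
    {k : ℕ} (hkl : k < l) : moore F g k ∉ gabidulinCode F g k := by
  have := (linearIndependent_moore hg).notMem_span_image (x := ⟨k, hkl⟩)
    (s := {i | (i : ℕ) < k}) (by simp)
  refine fun h => this (Submodule.span_mono ?_ h)
  rintro _ ⟨i, rfl⟩
  exact ⟨⟨i, i.2.trans hkl⟩, i.2, rfl⟩

end Moore

section FrobeniusStable

variable {F K : Type*} [Field F] [Fintype F] [Field K] [Fintype K] [Algebra F K] {l : ℕ}

/-- If some `c i` with `i > 0` were nonzero, take `i` largest: the Frobenius power `q^(k-i)`
moves the top term of `u` onto `moore g k`, which is outside the code. -/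
theorem mem_span_singleton_of_forall_frobeniusAlgHom_pow_mem {g : Fin l → K}
    (hg : LinearIndependent F g) {k : ℕ} (hkl : k < l) {u : Fin l → K}
    (hu : u ∈ gabidulinCode F g k)
    (hfrob : ∀ s < k, ⇑(frobeniusAlgHom F K ^ s) ∘ u ∈ gabidulinCode F g k) : u ∈ K ∙ g := by
  classical
  obtain ⟨c, rfl⟩ := (Submodule.mem_span_range_iff_exists_fun K).mp hu
  suffices hc : ∀ i : Fin k, 0 < (i : ℕ) → c i = 0 by
    refine Submodule.sum_mem _ fun i _ => ?_
    rcases Nat.eq_zero_or_pos i with hi | hi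
    · rw [hi, moore_zero]
      exact Submodule.smul_mem _ _ (Submodule.mem_span_singleton_self g)
    · rw [hc i hi, zero_smul]
      exact Submodule.zero_mem _
  by_contra! ⟨i₀, hi₀, hci₀⟩
  let S := Finset.univ.filter fun i => c i ≠ 0
  let i := S.max' ⟨i₀, by simp [S, hci₀]⟩
  have hci : c i ≠ 0 := (Finset.mem_filter.mp (S.max'_mem _)).2
  have hmax : ∀ j, c j ≠ 0 → j ≤ i := fun j hj => S.le_max' j (by simp [S, hj])
  have hi : 0 < (i : ℕ) := hi₀.trans_le (hmax i₀ hci₀)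
  set φ := frobeniusAlgHom F K ^ (k - i)
  have hφu : ⇑φ ∘ ∑ j : Fin k, c j • moore F g j
      = ∑ j : Fin k, φ (c j) • moore F g (j + (k - i)) := by
    funext t
    simp only [Function.comp_apply, Finset.sum_apply, Pi.smul_apply, smul_eq_mul, map_sum, map_mul,
      ← frobeniusAlgHom_pow_comp_moore g (k - i), φ]
  have hrest : ∑ j ∈ Finset.univ.erase i, φ (c j) • moore F g (j + (k - i))
      ∈ gabidulinCode F g k := by
    refine Submodule.sum_mem _ fun j hj => ?_
    by_cases hcj : c j = 0
    · rw [hcj, map_zero, zero_smul]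
      exact Submodule.zero_mem _
    · have hji : j < i := (hmax j hcj).lt_of_ne (Finset.ne_of_mem_erase hj)
      exact Submodule.smul_mem _ _ (moore_mem_gabidulinCode g (by omega))
  have htop := hfrob (k - i) (by omega)
  rw [hφu, ← Finset.add_sum_erase _ _ (Finset.mem_univ i),
    Submodule.add_mem_iff_left _ hrest, Nat.add_sub_cancel' i.2.le,
    Submodule.smul_mem_iff _ ((map_ne_zero φ).mpr hci)] at htop
  exact moore_notMem_gabidulinCode hg hkl htop

end FrobeniusStable

section MatrixStable

variable {F K : Type*} [Field F] [Fintype F] [Field K] [Algebra F K] {l : ℕ}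

theorem mulVec_moore (M : Matrix (Fin l) (Fin l) F) (g : Fin l → K) (i : ℕ) :
    M.map (algebraMap F K) *ᵥ moore F g i
      = ⇑(frobeniusAlgHom F K ^ i) ∘ (M.map (algebraMap F K) *ᵥ g) := by
  rw [AlgHom.comp_mulVec_map_algebraMap, ← moore_zero (F := F) g, frobeniusAlgHom_pow_comp_moore,
    zero_add, moore_zero]

theorem map_mulVecLin_gabidulinCode_eq_iff [Fintype K] {g : Fin l → K} (hg : LinearIndependent F g)
    {k : ℕ} (hk : 1 ≤ k) (hkl : k < l) {M : Matrix (Fin l) (Fin l) F}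
    (hM : IsUnit M) :
    (gabidulinCode F g k).map (M.map (algebraMap F K)).mulVecLin = gabidulinCode F g k ↔
      ∃ β : K, M.map (algebraMap F K) *ᵥ g = β • g := by
  constructor
  · intro h
    have hmaps : ∀ x ∈ gabidulinCode F g k, M.map (algebraMap F K) *ᵥ x ∈ gabidulinCode F g k :=
      fun x hx => by
        rw [← h, ← Matrix.mulVecLin_apply]
        exact Submodule.mem_map_of_mem hx
    have hfrob : ∀ s < k, ⇑(frobeniusAlgHom F K ^ s) ∘ (M.map (algebraMap F K) *ᵥ g)
        ∈ gabidulinCode F g k := fun s hs => by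
      rw [← mulVec_moore]
      exact hmaps _ (moore_mem_gabidulinCode g hs)
    have hu := hmaps g (self_mem_gabidulinCode g hk)
    obtain ⟨β, hβ⟩ := Submodule.mem_span_singleton.mp
      (mem_span_singleton_of_forall_frobeniusAlgHom_pow_mem hg hkl hu hfrob)
    exact ⟨β, hβ.symm⟩
  · rintro ⟨β, hβ⟩
    have hinj : Function.Injective (M.map (algebraMap F K)).mulVecLin :=
      Matrix.mulVec_injective_iff_isUnit.mpr (hM.map (algebraMap F K).mapMatrix)
    have hle : (gabidulinCode F g k).map (M.map (algebraMap F K)).mulVecLin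
        ≤ gabidulinCode F g k := by
      rw [gabidulinCode, Submodule.map_span_le]
      rintro _ ⟨i, rfl⟩
      have : ⇑(frobeniusAlgHom F K ^ (i : ℕ)) ∘ (β • g)
          = (frobeniusAlgHom F K ^ (i : ℕ)) β • moore F g i := by
        funext j
        simp [moore, coe_frobeniusAlgHom, pow_iterate, mul_pow]
      rw [Matrix.mulVecLin_apply, mulVec_moore, hβ, this]
      exact Submodule.smul_mem _ _ (moore_mem_gabidulinCode g i.2)
    exact Submodule.eq_of_le_of_finrank_le hle
      (Submodule.equivMapOfInjective _ hinj _).finrank_eq.le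

end MatrixStable

section Stabilizer

open Polynomial

variable {F K : Type*} [Field F] [Fintype F] [Field K] [Fintype K] [Algebra F K]

theorem ncard_setOf_pow_card_pow_eq_self {s : ℕ} (hs : s ≠ 0) (hsm : s ∣ Module.finrank F K) :
    {x : K | x ^ Fintype.card F ^ s = x}.ncard = Fintype.card F ^ s := by
  classical
  have hq : 1 < Fintype.card F := Fintype.one_lt_card
  have hdvd : (X ^ Fintype.card F ^ s - X : K[X]) ∣ X ^ Fintype.card K - X := by
    rw [Module.card_eq_pow_finrank (K := F) (V := K)]
    exact dvd_pow_pow_sub_self_of_dvd (r := (X : K[X])) (p := Fintype.card F) hsm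
  have hne : (X ^ Fintype.card K - X : K[X]) ≠ 0 := X_pow_card_sub_X_ne_zero K Fintype.one_lt_card
  have hnodup : (X ^ Fintype.card F ^ s - X : K[X]).roots.Nodup :=
    Multiset.nodup_of_le (roots.le_of_dvd hne hdvd)
      (roots_X_pow_card_sub_X K ▸ Finset.univ.nodup)
  have hsplits : (X ^ Fintype.card F ^ s - X : K[X]).Splits := by
    refine Splits.of_dvd ?_ hne hdvd
    simpa [Nat.card_eq_fintype_card] using splits_X_pow_nat_card_sub_X (K := K)
  have hroots : {x : K | x ^ Fintype.card F ^ s = x}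
      = (X ^ Fintype.card F ^ s - X : K[X]).roots.toFinset := by
    ext x
    simp [mem_roots (X_pow_card_pow_sub_X_ne_zero K hs hq), sub_eq_zero]
  rw [hroots, Set.ncard_coe_finset, Multiset.toFinset_card_of_nodup hnodup,
    ← hsplits.natDegree_eq_card_roots, X_pow_card_pow_sub_X_natDegree_eq K hs hq]

theorem IntermediateField.mem_iff_pow_card_pow_finrank_eq_self (E : IntermediateField F K)
    {x : K} : x ∈ E ↔ x ^ Fintype.card F ^ Module.finrank F E = x := by
  have hcard : Nat.card E = Fintype.card F ^ Module.finrank F E := by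
    rw [Module.natCard_eq_pow_finrank (K := F), Nat.card_eq_fintype_card]
  have hpow : ∀ y ∈ E, y ^ Fintype.card F ^ Module.finrank F E = y := fun y hy => by
    have := Fintype.ofFinite E
    rw [← hcard, Nat.card_eq_fintype_card]
    exact congrArg Subtype.val (FiniteField.pow_card (⟨y, hy⟩ : E))
  have hdvd : Module.finrank F E ∣ Module.finrank F K :=
    Dvd.intro _ (Module.finrank_mul_finrank F E K)
  have heq : (E : Set K) = {y | y ^ Fintype.card F ^ Module.finrank F E = y} :=
    Set.eq_of_subset_of_ncard_le hpow (by
      rw [ncard_setOf_pow_card_pow_eq_self Module.finrank_pos.ne' hdvd, ← hcard,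
        ← SetLike.coe_sort_coe, Nat.card_coe_set_eq]) (Set.toFinite _)
  exact ⟨hpow x, fun hx => SetLike.mem_coe.mp (heq ▸ hx)⟩

end Stabilizer

section MulStabilizer

variable {F K : Type*} [Field F] [Field K] [Algebra F K] [Fintype K]

def Submodule.mulStabilizer (W : Submodule F K) : IntermediateField F K :=
  Subalgebra.toIntermediateField'
    { carrier := {x | ∀ w ∈ W, x * w ∈ W}
      mul_mem' := fun hx hy w hw => mul_assoc _ _ w ▸ hx _ (hy w hw)
      add_mem' := fun hx hy w hw => add_mul _ _ w ▸ W.add_mem (hx w hw) (hy w hw)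
      algebraMap_mem' := fun c w hw => Algebra.smul_def c w ▸ W.smul_mem c hw }
    (Subalgebra.isField_of_algebraic _)

theorem Submodule.mem_mulStabilizer {W : Submodule F K} {x : K} :
    x ∈ W.mulStabilizer ↔ ∀ w ∈ W, x * w ∈ W :=
  Iff.rfl

/-- The stabilizer is the fixed field of `x ↦ x^(q^e)`, `e` its degree over `F`: maximality of `d`
gives `e ≤ d`, and since it contains the `q^d` solutions of `x^(q^d) = x`, also `d ≤ e`. -/
theorem pow_card_pow_eq_self_of_mem_mulStabilizer [Fintype F] {W : Submodule F K} {m d : ℕ}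
    (hm : Module.finrank F K = m) (hd0 : 0 < d) (hdm : d ∣ m)
    (hdW : ∀ β : K, β ^ Fintype.card F ^ d = β → ∀ w ∈ W, β * w ∈ W)
    (hdmax : ∀ d' : ℕ, 0 < d' → d' ∣ m →
      (∀ β : K, β ^ Fintype.card F ^ d' = β → ∀ w ∈ W, β * w ∈ W) → d' ≤ d)
    {β : K} (hβ : β ∈ W.mulStabilizer) : β ^ Fintype.card F ^ d = β := by
  set E := W.mulStabilizer
  have hE (x : K) := E.mem_iff_pow_card_pow_finrank_eq_self (x := x)
  have hdvd : Module.finrank F E ∣ Module.finrank F K :=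
    Dvd.intro _ (Module.finrank_mul_finrank F E K)
  have hed : Module.finrank F E ≤ d :=
    hdmax _ Module.finrank_pos (hm ▸ hdvd) fun γ hγ =>
      Submodule.mem_mulStabilizer.mp ((hE γ).mpr hγ)
  have hde : d ≤ Module.finrank F E := by
    refine (Nat.pow_le_pow_iff_right (Fintype.one_lt_card (α := F))).mp ?_
    calc Fintype.card F ^ d = {x : K | x ^ Fintype.card F ^ d = x}.ncard :=
          (ncard_setOf_pow_card_pow_eq_self hd0.ne' (hm ▸ hdm)).symm
      _ ≤ {x : K | x ^ Fintype.card F ^ Module.finrank F E = x}.ncard :=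
          Set.ncard_le_ncard (fun x hx => (hE x).mp (Submodule.mem_mulStabilizer.mpr (hdW x hx)))
            (Set.toFinite _)
      _ = Fintype.card F ^ Module.finrank F E :=
          ncard_setOf_pow_card_pow_eq_self Module.finrank_pos.ne' hdvd
  rw [le_antisymm hde hed]
  exact (hE β).mp hβ

end MulStabilizer

section Eigenvector

variable {F K : Type*} [Field F] [Field K] [Algebra F K] {l : ℕ}

theorem ne_zero_of_mulVec_eq_smul {M : Matrix (Fin l) (Fin l) F} (hM : IsUnit M) {g : Fin l → K}
    (hg : g ≠ 0) {β : K} (h : M.map (algebraMap F K) *ᵥ g = β • g) : β ≠ 0 := by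
  rintro rfl
  rw [zero_smul, ← Matrix.mulVec_zero (M.map (algebraMap F K))] at h
  exact hg (Matrix.mulVec_injective_iff_isUnit.mpr (hM.map (algebraMap F K).mapMatrix) h)

theorem mem_mulStabilizer_span_of_mulVec_eq_smul [Fintype K] {M : Matrix (Fin l) (Fin l) F}
    {g : Fin l → K} {β : K} (h : M.map (algebraMap F K) *ᵥ g = β • g) :
    β ∈ (Submodule.span F (Set.range g)).mulStabilizer := by
  have hgen : Submodule.span F (Set.range g)
      ≤ (Submodule.span F (Set.range g)).comap (LinearMap.mulLeft F β) := by
    rw [Submodule.span_le]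
    rintro _ ⟨j, rfl⟩
    have hj : β * g j = ∑ r, M j r • g r := by
      simpa [Matrix.mulVec, dotProduct, Algebra.smul_def] using (congrFun h j).symm
    rw [SetLike.mem_coe, Submodule.mem_comap, LinearMap.mulLeft_apply, hj]
    exact Submodule.sum_mem _ fun r _ => Submodule.smul_mem _ _ (Submodule.subset_span ⟨r, rfl⟩)
  exact Submodule.mem_mulStabilizer.mpr fun w hw => hgen hw

end Eigenvector

theorem Matrix.bijective_mul_mul_of_isUnit {R : Type*} [CommRing R] {n p : Type*} [Fintype n]
    [DecidableEq n] [Fintype p] [DecidableEq p] {L : Matrix n n R} {M : Matrix p p R}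
    (hL : IsUnit L) (hM : IsUnit M) : Function.Bijective fun A : Matrix n p R => L * A * M := by
  rw [Matrix.isUnit_iff_isUnit_det] at hL hM
  refine Function.bijective_iff_has_inverse.mpr ⟨fun A => L⁻¹ * A * M⁻¹, fun A => ?_, fun A => ?_⟩
  · simp [Matrix.mul_assoc, hL, hM]
  · simp [Matrix.mul_assoc, hL, hM]

section Expand

variable {F K : Type*} [Field F] [Field K] [Algebra F K] {m l : ℕ} (b : Module.Basis (Fin m) F K)

theorem expand_injective : Function.Injective (expand b : (Fin l → K) → Matrix (Fin l) (Fin m) F) :=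
  fun _ _ h => funext fun i => b.repr.injective (Finsupp.ext fun j => congrFun (congrFun h i) j)

theorem mul_expand (L : Matrix (Fin l) (Fin l) F) (x : Fin l → K) :
    L * expand b x = expand b (L.map (algebraMap F K) *ᵥ x) := by
  ext i j
  simp [expand, Matrix.mul_apply, Matrix.mulVec, dotProduct, ← Algebra.smul_def,
    Finsupp.finsetSum_apply]

theorem expand_mul_expand_mul_basis (x : Fin l → K) (α : K) :
    expand b x * expand b (fun i => α * b i) = expand b (α • x) := by
  ext i j
  have hx : α * x i = ∑ t, b.repr (x i) t • (α * b t) := by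
    conv_lhs => rw [← b.sum_repr (x i), Finset.mul_sum]
    simp only [mul_smul_comm]
  simp [expand, Matrix.mul_apply, hx, Finsupp.finsetSum_apply]

theorem expand_basis : expand b ⇑b = 1 := by
  ext i j
  simp [expand, Matrix.one_apply, Finsupp.single_apply]

theorem isUnit_expand_mul_basis {α : K} (hα : α ≠ 0) : IsUnit (expand b fun i => α * b i) := by
  have hinv : (expand b fun i => α * b i) * expand b (fun i => α⁻¹ * b i) = 1 := by
    rw [expand_mul_expand_mul_basis, ← expand_basis b]
    congr 1
    funext i
    simp [hα]
  exact (Matrix.isUnit_iff_isUnit_det _).mpr (Matrix.isUnit_det_of_right_inverse hinv)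

theorem image_mul_expand_mul_expand_eq_iff (C : Submodule K (Fin l → K))
    (L : Matrix (Fin l) (Fin l) F) {α : K} (hα : α ≠ 0) :
    (fun A => L * A * expand b (fun i => α * b i)) '' (expand b '' (C : Set (Fin l → K)))
        = expand b '' (C : Set (Fin l → K)) ↔
      C.map (L.map (algebraMap F K)).mulVecLin = C := by
  have hcomm : (fun A => L * A * expand b (fun i => α * b i)) ∘ expand b
      = expand b ∘ (α • (L.map (algebraMap F K)).mulVecLin) := by
    funext x
    simp [mul_expand, expand_mul_expand_mul_basis]
  rw [← Set.image_comp, hcomm, Set.image_comp, (expand_injective b).image_injective.eq_iff,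
    ← Submodule.map_coe, SetLike.coe_set_eq, Submodule.map_smul _ _ _ hα]

end Expand

theorem gabidulin_matrix_automorphisms_general
    {F K : Type*} [Field F] [Fintype F] [Field K] [Fintype K] [Algebra F K]
    {m k l : ℕ} (hm : Module.finrank F K = m)
    (hk : 1 ≤ k) (hkl : k < l)
    (g : Fin l → K) (hg : LinearIndependent F g)
    (C : Submodule K (Fin l → K))
    (hC : C = Submodule.span K
      (Set.range fun i : Fin k => fun j => g j ^ Fintype.card F ^ (i : ℕ)))
    (W : Submodule F K) (hW : W = Submodule.span F (Set.range g))
    (d : ℕ) (hd0 : 0 < d) (hdm : d ∣ m)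
    (hdW : ∀ β : K, β ^ Fintype.card F ^ d = β → ∀ w ∈ W, β * w ∈ W)
    (hdmax : ∀ d' : ℕ, 0 < d' → d' ∣ m →
      (∀ β : K, β ^ Fintype.card F ^ d' = β → ∀ w ∈ W, β * w ∈ W) → d' ≤ d)
    (b : Module.Basis (Fin m) F K) :
    (∀ (α : Kˣ) (L : GL (Fin l) F),
      ((fun A => (L : Matrix (Fin l) (Fin l) F) * A * expand b (fun i => (α : K) * b i)) ''
          (expand b '' (C : Set (Fin l → K))) = expand b '' (C : Set (Fin l → K)))
        ↔ ∃ β : K, β ≠ 0 ∧ β ^ Fintype.card F ^ d = β ∧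
            Matrix.vecMul g ((L : Matrix (Fin l) (Fin l) F)ᵀ.map (algebraMap F K)) = β • g) ∧
    (∀ (α : Kˣ) (L : GL (Fin l) F),
      (∃ β : K, β ≠ 0 ∧ β ^ Fintype.card F ^ d = β ∧
          Matrix.vecMul g ((L : Matrix (Fin l) (Fin l) F)ᵀ.map (algebraMap F K)) = β • g) →
        Function.Bijective
            (fun A : Matrix (Fin l) (Fin m) F =>
              (L : Matrix (Fin l) (Fin l) F) * A * expand b (fun i => (α : K) * b i)) ∧
          (∀ A : Matrix (Fin l) (Fin m) F,
            ((L : Matrix (Fin l) (Fin l) F) * A * expand b (fun i => (α : K) * b i)).rank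
              = A.rank) ∧
          (fun A => (L : Matrix (Fin l) (Fin l) F) * A * expand b (fun i => (α : K) * b i)) ''
              (expand b '' (C : Set (Fin l → K))) = expand b '' (C : Set (Fin l → K))) := by
  obtain rfl : C = gabidulinCode F g k := hC
  subst hW
  have hg0 : g ≠ 0 := fun h => hg.ne_zero ⟨0, by omega⟩ (by rw [h, Pi.zero_apply])
  have key (α : Kˣ) (L : GL (Fin l) F) :
      ((fun A => (L : Matrix (Fin l) (Fin l) F) * A * expand b (fun i => (α : K) * b i)) ''
          (expand b '' (gabidulinCode F g k : Set (Fin l → K)))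
          = expand b '' (gabidulinCode F g k : Set (Fin l → K)))
        ↔ ∃ β : K, β ≠ 0 ∧ β ^ Fintype.card F ^ d = β ∧
            Matrix.vecMul g ((L : Matrix (Fin l) (Fin l) F)ᵀ.map (algebraMap F K)) = β • g := by
    rw [image_mul_expand_mul_expand_eq_iff b _ _ α.ne_zero,
      map_mulVecLin_gabidulinCode_eq_iff hg hk hkl L.isUnit, Matrix.transpose_map,
      Matrix.vecMul_transpose]
    refine ⟨fun ⟨β, hβ⟩ => ⟨β, ne_zero_of_mulVec_eq_smul L.isUnit hg0 hβ, ?_, hβ⟩,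
      fun ⟨β, _, _, hβ⟩ => ⟨β, hβ⟩⟩
    exact pow_card_pow_eq_self_of_mem_mulStabilizer hm hd0 hdm hdW hdmax
      (mem_mulStabilizer_span_of_mulVec_eq_smul hβ)
  have hMα (α : Kˣ) := isUnit_expand_mul_basis b α.ne_zero
  refine ⟨key, fun α L hβ => ⟨Matrix.bijective_mul_mul_of_isUnit L.isUnit (hMα α), fun A => ?_,
    (key α L).mpr hβ⟩⟩
  rw [Matrix.rank_mul_eq_left_of_isUnit_det _ _ ((Matrix.isUnit_iff_isUnit_det _).mp (hMα α)),
    Matrix.rank_mul_eq_right_of_isUnit_det _ _ ((Matrix.isUnit_iff_isUnit_det _).mp L.isUnit)]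

/-- **Matrix automorphisms of an expanded Gabidulin code of the form `A ↦ L A M_α`.**
With `C = C_{k,g}` the Gabidulin code of a Gabidulin vector `g`, `W = span_F {g_i}`, and
`d` the largest positive integer such that `W` is an `F_{q^d}`-vector space, a map
`f(A) = L * A * M_α` (`L ∈ GL_l(F)`, `α ∈ K^×`, `M_α = ε_b(α • b)`) fixes `ε_b(C)`
setwise if and only if `g · Lᵀ = β • g` for some `β ∈ F_{q^d}^×`.  In particular every
such map is an invertible `F`-linear rank-preserving map fixing `ε_b(C)` setwise. -/
theorem gabidulin_matrix_automorphisms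
    {F K : Type*} [Field F] [Fintype F] [Field K] [Fintype K] [Algebra F K]
    {m k l : ℕ} (hm : Module.finrank F K = m)
    (hk : 1 ≤ k) (hkl : k < l) (hlm : l ≤ m)
    (g : Fin l → K) (hg : LinearIndependent F g)
    (C : Submodule K (Fin l → K))
    (hC : C = Submodule.span K
      (Set.range fun i : Fin k => fun j => g j ^ Fintype.card F ^ (i : ℕ)))
    (W : Submodule F K) (hW : W = Submodule.span F (Set.range g))
    (d : ℕ) (hd0 : 0 < d) (hdm : d ∣ m)
    (hdW : ∀ β : K, β ^ Fintype.card F ^ d = β → ∀ w ∈ W, β * w ∈ W)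
    (hdmax : ∀ d' : ℕ, 0 < d' → d' ∣ m →
      (∀ β : K, β ^ Fintype.card F ^ d' = β → ∀ w ∈ W, β * w ∈ W) → d' ≤ d)
    (b : Module.Basis (Fin m) F K) :
    (∀ (α : Kˣ) (L : GL (Fin l) F),
      ((fun A => (L : Matrix (Fin l) (Fin l) F) * A * expand b (fun i => (α : K) * b i)) ''
          (expand b '' (C : Set (Fin l → K))) = expand b '' (C : Set (Fin l → K)))
        ↔ ∃ β : K, β ≠ 0 ∧ β ^ Fintype.card F ^ d = β ∧
            Matrix.vecMul g ((L : Matrix (Fin l) (Fin l) F)ᵀ.map (algebraMap F K)) = β • g) ∧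
    (∀ (α : Kˣ) (L : GL (Fin l) F),
      (∃ β : K, β ≠ 0 ∧ β ^ Fintype.card F ^ d = β ∧
          Matrix.vecMul g ((L : Matrix (Fin l) (Fin l) F)ᵀ.map (algebraMap F K)) = β • g) →
        Function.Bijective
            (fun A : Matrix (Fin l) (Fin m) F =>
              (L : Matrix (Fin l) (Fin l) F) * A * expand b (fun i => (α : K) * b i)) ∧
          (∀ A : Matrix (Fin l) (Fin m) F,
            ((L : Matrix (Fin l) (Fin l) F) * A * expand b (fun i => (α : K) * b i)).rank
              = A.rank) ∧
          (fun A => (L : Matrix (Fin l) (Fin l) F) * A * expand b (fun i => (α : K) * b i)) ''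
              (expand b '' (C : Set (Fin l → K))) = expand b '' (C : Set (Fin l → K))) :=
  gabidulin_matrix_automorphisms_general hm hk hkl g hg C hC W hW d hd0 hdm hdW hdmax b
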